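/- arXiv:1506.00552 — 2 statements merged into one kernel-verified Lean document; each statement's English description precedes it below -/
import Mathlib

section
/- Let f : ℝⁿ → ℝ be differentiable with coordinate-wise L-Lipschitz continuous gradient and μ-strongly convex with respect to the Euclidean norm (μ > 0), with minimizer x*. If x^{k+1} = x^k − (1/L)∇_{i_k}f(x^k)e_{i_k} where i_k ∈ argmax_i |∇ᵢf(x^k)| (the Gauss-Southwell rule), then f(x^{k+1}) − f(x*) ≤ (1 − μ/(Ln))(f(x^k) − f(x*)). -/
open scoped RealInnerProductSpace

/-!
Integrating the coordinate-wise Lipschitz bound along the step gives the descent estimate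
`f(x^{k+1}) ≤ f(x^k) - (∇_{i_k} f(x^k))² / (2L)`. The Gauss–Southwell choice of `i_k` gives
`‖∇f(x^k)‖² ≤ n (∇_{i_k} f(x^k))²`, and minimising the strong-convexity lower bound over `y`
gives the Polyak–Łojasiewicz inequality `2μ (f(x^k) - f(y)) ≤ ‖∇f(x^k)‖²` for every `y`.
Chaining the three yields the rate.
-/

open Set in
theorem le_add_deriv_add_half_of_deriv_sub_le {g g' : ℝ → ℝ} {K : ℝ}
    (hg : ∀ t ∈ Icc (0 : ℝ) 1, HasDerivAt g (g' t) t)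
    (hg' : ∀ t ∈ Icc (0 : ℝ) 1, g' t - g' 0 ≤ K * t) :
    g 1 ≤ g 0 + g' 0 + K / 2 := by
  set φ : ℝ → ℝ := fun t ↦ g 0 + t * g' 0 + K / 2 * t ^ 2 - g t
  have hφ : ∀ t ∈ Icc (0 : ℝ) 1, HasDerivAt φ (g' 0 + K * t - g' t) t := fun t ht ↦ by
    have := ((((hasDerivAt_id t).mul_const (g' 0)).const_add (g 0)).add
      ((hasDerivAt_pow 2 t).const_mul (K / 2))).sub (hg t ht)
    exact this.congr_deriv (by norm_num; ring)
  have hmono : MonotoneOn φ (Icc 0 1) := by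
    refine monotoneOn_of_hasDerivWithinAt_nonneg (f' := fun t ↦ g' 0 + K * t - g' t)
      (convex_Icc 0 1) (fun t ht ↦ (hφ t ht).continuousAt.continuousWithinAt)
      (fun t ht ↦ ?_) (fun t ht ↦ ?_)
    · exact (hφ t (interior_subset ht)).hasDerivWithinAt
    · linarith [hg' t (interior_subset ht)]
  have hφ01 := hmono (left_mem_Icc.2 zero_le_one) (right_mem_Icc.2 zero_le_one) zero_le_one
  simp only [φ] at hφ01
  linarith

theorem HasGradientAt.hasDerivAt_comp_add_smul {E : Type*} [NormedAddCommGroup E]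
    [InnerProductSpace ℝ E] [CompleteSpace E] {f : E → ℝ} {x v g : E} {t : ℝ}
    (hf : HasGradientAt f g (x + t • v)) :
    HasDerivAt (fun s : ℝ ↦ f (x + s • v)) ⟪g, v⟫ t := by
  have hline : HasDerivAt (fun s : ℝ ↦ x + s • v) v t := by
    simpa using ((hasDerivAt_id t).smul_const v).const_add x
  have h := hf.hasFDerivAt.comp_hasDerivAt t hline
  rw [InnerProductSpace.toDual_apply_apply] at h
  exact h

section CoordinateDescent

variable {ι : Type*} [Fintype ι] [DecidableEq ι]
  {f : EuclideanSpace ℝ ι → ℝ} {f' : EuclideanSpace ℝ ι → EuclideanSpace ℝ ι}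

theorem le_add_mul_apply_add_sq_of_coord_lipschitz (hf : ∀ x, HasGradientAt f (f' x) x)
    {L : ℝ} {x : EuclideanSpace ℝ ι} {i : ι}
    (hlip : ∀ β : ℝ, |f' (x + β • EuclideanSpace.single i 1) i - f' x i| ≤ L * |β|) (α : ℝ) :
    f (x + α • EuclideanSpace.single i 1) ≤ f x + α * f' x i + L / 2 * α ^ 2 := by
  set v := α • EuclideanSpace.single i (1 : ℝ)
  have hline : ∀ t : ℝ, x + t • v = x + (t * α) • EuclideanSpace.single i 1 := fun t ↦ by
    rw [smul_smul]
  have hderiv : ∀ t : ℝ, HasDerivAt (fun s ↦ f (x + s • v)) (α * f' (x + t • v) i) t := by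
    intro t
    convert (hf (x + t • v)).hasDerivAt_comp_add_smul using 1
    simp [v, real_inner_smul_right, EuclideanSpace.inner_single_right]
  have key := le_add_deriv_add_half_of_deriv_sub_le (K := L * α ^ 2) (fun t _ ↦ hderiv t)
    fun t ht ↦ by
      have h := hlip (t * α)
      rw [← hline] at h
      calc α * f' (x + t • v) i - α * f' (x + (0 : ℝ) • v) i
          ≤ |α| * |f' (x + t • v) i - f' x i| := by
            rw [zero_smul, add_zero, ← mul_sub]; exact (le_abs_self _).trans (abs_mul _ _).le
        _ ≤ |α| * (L * |t * α|) := mul_le_mul_of_nonneg_left h (abs_nonneg α)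
        _ = L * α ^ 2 * t := by rw [abs_mul, abs_of_nonneg ht.1, ← sq_abs α]; ring
  simpa [v, mul_comm, mul_div_right_comm] using key

theorem le_sub_sq_div_of_coord_lipschitz (hf : ∀ x, HasGradientAt f (f' x) x)
    {L : ℝ} (hL : L ≠ 0) {x : EuclideanSpace ℝ ι} {i : ι}
    (hlip : ∀ β : ℝ, |f' (x + β • EuclideanSpace.single i 1) i - f' x i| ≤ L * |β|) :
    f (x - (1 / L * f' x i) • EuclideanSpace.single i 1) ≤ f x - f' x i ^ 2 / (2 * L) := by
  have h := le_add_mul_apply_add_sq_of_coord_lipschitz hf hlip (-(1 / L * f' x i))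
  rw [neg_smul, ← sub_eq_add_neg] at h
  convert h using 1
  field_simp
  ring

end CoordinateDescent

theorem EuclideanSpace.norm_sq_le_card_mul_sq_of_abs_le {ι : Type*} [Fintype ι]
    {v : EuclideanSpace ℝ ι} {i : ι} (hi : ∀ j, |v j| ≤ |v i|) :
    ‖v‖ ^ 2 ≤ Fintype.card ι * v i ^ 2 := by
  calc ‖v‖ ^ 2 = ∑ j, v j ^ 2 := EuclideanSpace.real_norm_sq_eq v
    _ ≤ ∑ _j : ι, v i ^ 2 := Finset.sum_le_sum fun j _ ↦ sq_le_sq.2 (hi j)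
    _ = Fintype.card ι * v i ^ 2 := by simp

theorem two_mul_sub_le_norm_sq_of_strongly_convex {E : Type*} [NormedAddCommGroup E]
    [InnerProductSpace ℝ E] {f : E → ℝ} {x g : E} {μ : ℝ} (hμ : 0 < μ)
    (hsc : ∀ y, f y ≥ f x + ⟪g, y - x⟫ + μ / 2 * ‖y - x‖ ^ 2) (y : E) :
    2 * μ * (f x - f y) ≤ ‖g‖ ^ 2 := by
  have hCS : -(‖g‖ * ‖y - x‖) ≤ ⟪g, y - x⟫ := (abs_le.1 (abs_real_inner_le_norm g _)).1
  nlinarith [hsc y, sq_nonneg (‖g‖ - μ * ‖y - x‖)]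

theorem gauss_southwell_rate_euclidean_general {n : ℕ}
    (f : EuclideanSpace ℝ (Fin n) → ℝ)
    (f' : EuclideanSpace ℝ (Fin n) → EuclideanSpace ℝ (Fin n))
    (hf : ∀ x, HasGradientAt f (f' x) x)
    (L : ℝ) (hL : 0 < L)
    (hlip : ∀ (x : EuclideanSpace ℝ (Fin n)) (α : ℝ) (i : Fin n),
      |f' (x + α • EuclideanSpace.single i 1) i - f' x i| ≤ L * |α|)
    (μ : ℝ) (hμ : 0 < μ)
    (hsc : ∀ x y, f y ≥ f x + ⟪f' x, y - x⟫ + μ / 2 * ‖y - x‖ ^ 2)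
    (xs : EuclideanSpace ℝ (Fin n))
    (xk : EuclideanSpace ℝ (Fin n)) (ik : Fin n)
    (hik : ∀ j, |f' xk j| ≤ |f' xk ik|)
    (xk1 : EuclideanSpace ℝ (Fin n))
    (hstep : xk1 = xk - ((1 / L) * f' xk ik) • EuclideanSpace.single ik 1) :
    f xk1 - f xs ≤ (1 - μ / (L * n)) * (f xk - f xs) := by
  have hn : (0 : ℝ) < n := by exact_mod_cast Fin.pos ik
  have hdescent : f xk1 ≤ f xk - f' xk ik ^ 2 / (2 * L) :=
    hstep ▸ le_sub_sq_div_of_coord_lipschitz hf hL.ne' (hlip xk · ik)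
  have hmax : ‖f' xk‖ ^ 2 ≤ n * f' xk ik ^ 2 := by
    simpa using EuclideanSpace.norm_sq_le_card_mul_sq_of_abs_le hik
  have hpl := two_mul_sub_le_norm_sq_of_strongly_convex hμ (hsc xk) xs
  have hgain : μ / (L * n) * (f xk - f xs) ≤ f' xk ik ^ 2 / (2 * L) := by
    rw [div_mul_eq_mul_div, div_le_div_iff₀ (by positivity) (by positivity)]
    nlinarith
  linarith

/-- classical convergence rate of the Gauss-Southwell rule under
`μ`-strong convexity in the Euclidean norm. -/
theorem gauss_southwell_rate_euclidean {n : ℕ}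
    (f : EuclideanSpace ℝ (Fin n) → ℝ)
    (f' : EuclideanSpace ℝ (Fin n) → EuclideanSpace ℝ (Fin n))
    (hf : ∀ x, HasGradientAt f (f' x) x)
    (L : ℝ) (hL : 0 < L)
    (hlip : ∀ (x : EuclideanSpace ℝ (Fin n)) (α : ℝ) (i : Fin n),
      |f' (x + α • EuclideanSpace.single i 1) i - f' x i| ≤ L * |α|)
    (μ : ℝ) (hμ : 0 < μ)
    (hsc : ∀ x y, f y ≥ f x + ⟪f' x, y - x⟫ + μ / 2 * ‖y - x‖ ^ 2)
    (xs : EuclideanSpace ℝ (Fin n)) (hxs : ∀ y, f xs ≤ f y)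
    (xk : EuclideanSpace ℝ (Fin n)) (ik : Fin n)
    (hik : ∀ j, |f' xk j| ≤ |f' xk ik|)
    (xk1 : EuclideanSpace ℝ (Fin n))
    (hstep : xk1 = xk - ((1 / L) * f' xk ik) • EuclideanSpace.single ik 1) :
    f xk1 - f xs ≤ (1 - μ / (L * n)) * (f xk - f xs) :=
  gauss_southwell_rate_euclidean_general f f' hf L hL hlip μ hμ hsc xs xk ik hik xk1 hstep
end

section
/- Let f : ℝⁿ → ℝ be convex and differentiable, with coordinate-wise L-Lipschitz continuous gradient, μ₁-strongly convex in the 1-norm (μ₁ > 0 with μ₁ < L), having ∇f L₁-Lipschitz continuous in the 1-norm, and with minimizer x*. Suppose at each iteration the coordinate i_k satisfies the additive-error condition |∇_{i_k}f(x^k)| ≥ ‖∇f(x^k)‖∞ − ε_k with ε_k ≥ 0, and x^{k+1} = x^k − (1/L)∇_{i_k}f(x^k)e_{i_k}. Then for every k, f(x^k) − f(x*) ≤ (1 − μ₁/L)^k [f(x⁰) − f(x*) + √(f(x⁰) − f(x*)) A_k], where A_k = (√(2L₁)/L) Σ_{i=1}^{k} (1 − μ₁/L)^{−i} ε_i. 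-/
open scoped RealInnerProductSpace

/-!
Write `Δₖ = f(xᵏ) - f(x*)` and `g` for the chosen partial derivative. An exact coordinate step
decreases `f` by at least `g² / (2L)`, and the additive rule gives `g² ≥ ‖∇f‖∞² - 2ε‖∇f‖∞`.
Strong convexity in `‖·‖₁` and Hölder give `‖∇f‖∞² ≥ 2μ₁Δ`, while a single coordinate step of
length `∇ⱼf / L₁` from any point shows `‖∇f‖∞ ≤ √(2L₁Δ)`. Hence
`Δₖ₊₁ ≤ (1 - μ₁/L) Δₖ + (√(2L₁)/L) εₖ₊₁ √Δₖ`; as `Δₖ` is nonincreasing, `√Δₖ ≤ √Δ₀`,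
and unrolling this linear recursion gives the bound.
-/

open Set

theorem apply_one_le_of_abs_deriv_sub_le {g g' : ℝ → ℝ} (hg : ∀ t, HasDerivAt g (g' t) t)
    {C : ℝ} (hC : ∀ t ∈ Icc (0 : ℝ) 1, |g' t - g' 0| ≤ C * t) :
    g 1 ≤ g 0 + g' 0 + C / 2 := by
  set φ : ℝ → ℝ := fun t => g t - (t * g' 0 + C * t ^ 2 / 2)
  have hφ : ∀ t, HasDerivAt φ (g' t - (g' 0 + C * t)) t := fun t => by
    have hq : HasDerivAt (fun t => t * g' 0 + C * t ^ 2 / 2) (g' 0 + C * t) t :=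
      ((hasDerivAt_mul_const _).add (((hasDerivAt_pow 2 t).const_mul C).div_const 2)).congr_deriv
        (by push_cast; ring)
    exact (hg t).sub hq
  have hanti : AntitoneOn φ (Icc 0 1) := by
    refine antitoneOn_of_deriv_nonpos (convex_Icc 0 1)
      (fun t _ => (hφ t).continuousAt.continuousWithinAt)
      (fun t _ => (hφ t).differentiableAt.differentiableWithinAt) fun t ht => ?_
    rw [interior_Icc] at ht
    rw [(hφ t).deriv]
    linarith [le_abs_self (g' t - g' 0), hC t (Ioo_subset_Icc_self ht)]
  have := hanti (left_mem_Icc.2 zero_le_one) (right_mem_Icc.2 zero_le_one) zero_le_one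
  simp only [φ] at this
  linarith

section Coordinates

variable {ι : Type*} [Fintype ι]

theorem abs_inner_le_iSup_abs_mul_sum_abs (v d : EuclideanSpace ℝ ι) :
    |⟪v, d⟫| ≤ (⨆ i, |v i|) * ∑ i, |d i| := by
  rw [PiLp.inner_apply, Finset.mul_sum]
  refine (Finset.abs_sum_le_sum_abs _ _).trans (Finset.sum_le_sum fun i _ => ?_)
  rw [Real.inner_apply, abs_mul]
  exact mul_le_mul_of_nonneg_right (le_ciSup (Finite.bddAbove_range fun i => |v i|) i)
    (abs_nonneg _)

variable {f : EuclideanSpace ℝ ι → ℝ} {f' : EuclideanSpace ℝ ι → EuclideanSpace ℝ ι}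

theorem two_mul_sub_le_sq_iSup_abs_grad {μ₁ : ℝ} (hμ₁ : 0 < μ₁)
    (hsc : ∀ x y, f y ≥ f x + ⟪f' x, y - x⟫ + μ₁ / 2 * (∑ i, |y i - x i|) ^ 2)
    (xs y : EuclideanSpace ℝ ι) :
    2 * μ₁ * (f y - f xs) ≤ (⨆ i, |f' y i|) ^ 2 := by
  have hinner := abs_inner_le_iSup_abs_mul_sum_abs (f' y) (xs - y)
  simp only [PiLp.sub_apply] at hinner
  nlinarith [hsc y xs, neg_abs_le ⟪f' y, xs - y⟫,
    sq_nonneg ((⨆ i, |f' y i|) - μ₁ * ∑ i, |xs i - y i|)]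

variable [DecidableEq ι]

theorem sum_abs_smul_single (α : ℝ) (j : ι) :
    ∑ i, |(α • EuclideanSpace.single j (1 : ℝ) : EuclideanSpace ℝ ι) i| = |α| := by
  simp [apply_ite]

theorem abs_grad_apply_sub_le_of_iSup_le {L₁ : ℝ}
    (hlip1 : ∀ x y : EuclideanSpace ℝ ι, (⨆ i, |f' x i - f' y i|) ≤ L₁ * ∑ i, |x i - y i|)
    (x : EuclideanSpace ℝ ι) (α : ℝ) (j : ι) :
    |f' (x + α • EuclideanSpace.single j 1) j - f' x j| ≤ L₁ * |α| := by
  have := hlip1 (x + α • EuclideanSpace.single j 1) x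
  simp only [PiLp.add_apply, add_sub_cancel_left, sum_abs_smul_single] at this
  exact (le_ciSup (Finite.bddAbove_range fun i => |f' _ i - f' x i|) j).trans this

theorem apply_add_smul_single_le (hf : ∀ x, HasGradientAt f (f' x) x)
    {x : EuclideanSpace ℝ ι} {j : ι} {C : ℝ}
    (hC : ∀ α : ℝ, |f' (x + α • EuclideanSpace.single j 1) j - f' x j| ≤ C * |α|) (β : ℝ) :
    f (x + β • EuclideanSpace.single j 1) ≤ f x + β * f' x j + C * β ^ 2 / 2 := by
  set c : ℝ → EuclideanSpace ℝ ι := fun t => x + (t * β) • EuclideanSpace.single j 1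
  have hc : ∀ t, HasDerivAt c (β • EuclideanSpace.single j 1) t := fun t =>
    ((hasDerivAt_mul_const β).smul_const _).const_add x
  have hfc : ∀ t, HasDerivAt (f ∘ c) (β * f' (c t) j) t := fun t => by
    have := (hf (c t)).hasFDerivAt.comp_hasDerivAt t (hc t)
    simpa [real_inner_smul_right, EuclideanSpace.inner_single_right] using this
  have key := apply_one_le_of_abs_deriv_sub_le hfc (C := C * β ^ 2) fun t ht => by
    have hc0 : c 0 = x := by simp [c]
    rw [hc0, ← mul_sub, abs_mul]
    calc |β| * |f' (c t) j - f' x j| ≤ |β| * (C * |t * β|) := by gcongr; exact hC _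
      _ = C * β ^ 2 * t := by rw [abs_mul, abs_of_nonneg ht.1, ← sq_abs β]; ring
  simpa [c, mul_comm] using key

theorem apply_sub_smul_single_le (hf : ∀ x, HasGradientAt f (f' x) x)
    {x : EuclideanSpace ℝ ι} {j : ι} {C : ℝ} (hC₀ : 0 < C)
    (hC : ∀ α : ℝ, |f' (x + α • EuclideanSpace.single j 1) j - f' x j| ≤ C * |α|) :
    f (x - (f' x j / C) • EuclideanSpace.single j 1) ≤ f x - f' x j ^ 2 / (2 * C) := by
  have := apply_add_smul_single_le hf hC (-(f' x j / C))
  rw [neg_smul, ← sub_eq_add_neg] at this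
  convert this using 1
  field_simp
  ring

theorem sq_iSup_abs_grad_le (hf : ∀ x, HasGradientAt f (f' x) x) {L₁ : ℝ} (hL₁ : 0 < L₁)
    (hlip1 : ∀ x y : EuclideanSpace ℝ ι, (⨆ i, |f' x i - f' y i|) ≤ L₁ * ∑ i, |x i - y i|)
    {xs : EuclideanSpace ℝ ι} (hxs : ∀ y, f xs ≤ f y) (y : EuclideanSpace ℝ ι) :
    (⨆ i, |f' y i|) ^ 2 ≤ 2 * L₁ * (f y - f xs) := by
  have hgap : 0 ≤ 2 * L₁ * (f y - f xs) := mul_nonneg (by positivity) (sub_nonneg.2 (hxs y))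
  have hcoord : ∀ j, |f' y j| ≤ √(2 * L₁ * (f y - f xs)) := fun j => by
    have := (hxs _).trans
      (apply_sub_smul_single_le hf hL₁ (abs_grad_apply_sub_le_of_iSup_le hlip1 y · j))
    rw [le_sub_iff_add_le, ← le_sub_iff_add_le', div_le_iff₀ (by positivity)] at this
    exact Real.abs_le_sqrt (by linarith)
  have hA : 0 ≤ ⨆ i, |f' y i| := Real.iSup_nonneg fun i => abs_nonneg _
  calc (⨆ i, |f' y i|) ^ 2 ≤ √(2 * L₁ * (f y - f xs)) ^ 2 :=
        pow_le_pow_left₀ hA (Real.iSup_le hcoord (Real.sqrt_nonneg _)) 2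
    _ = 2 * L₁ * (f y - f xs) := Real.sq_sqrt hgap

end Coordinates

theorem gap_le_of_approx_greedy_descent {Δ Δ' g a e L L₁ μ : ℝ} (hL : 0 < L) (hL₁ : 0 ≤ L₁)
    (hdesc : Δ' ≤ Δ - g ^ 2 / (2 * L)) (hg : a - e ≤ |g|) (ha : 0 ≤ a) (he : 0 ≤ e)
    (hup : a ^ 2 ≤ 2 * L₁ * Δ) (hlow : 2 * μ * Δ ≤ a ^ 2) :
    Δ' ≤ (1 - μ / L) * Δ + √(2 * L₁) / L * e * √Δ := by
  have hg2 : a ^ 2 - 2 * a * e ≤ g ^ 2 := by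
    rcases le_or_gt e a with h | h
    · nlinarith [sq_abs g]
    · nlinarith [sq_nonneg g]
  have ha' : a ≤ √(2 * L₁) * √Δ := by
    rw [← Real.sqrt_mul (by positivity)]
    exact Real.le_sqrt_of_sq_le hup
  calc Δ' ≤ Δ - (a ^ 2 - 2 * a * e) / (2 * L) := by
        linarith [div_le_div_of_nonneg_right hg2 (by positivity : (0 : ℝ) ≤ 2 * L)]
    _ = Δ - a ^ 2 / (2 * L) + a * e / L := by field_simp; ring
    _ ≤ Δ - 2 * μ * Δ / (2 * L) + √(2 * L₁) * √Δ * e / L := by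
        gcongr
    _ = (1 - μ / L) * Δ + √(2 * L₁) / L * e * √Δ := by field_simp

theorem le_pow_mul_of_le_mul_add_mul_sqrt {Δ e : ℕ → ℝ} {ρ c : ℝ} (hρ : 0 < ρ) (hc : 0 ≤ c)
    (he : ∀ k, 0 ≤ e k) (hΔ : ∀ k, Δ k ≤ Δ 0)
    (hrec : ∀ k, Δ (k + 1) ≤ ρ * Δ k + c * e (k + 1) * √(Δ k)) (k : ℕ) :
    Δ k ≤ ρ ^ k * (Δ 0 + √(Δ 0) * (c * ∑ i ∈ Finset.Icc 1 k, (ρ ^ i)⁻¹ * e i)) := by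
  induction k with
  | zero => simp
  | succ k ih =>
    calc Δ (k + 1) ≤ ρ * (ρ ^ k * (Δ 0 + √(Δ 0) * (c * ∑ i ∈ Finset.Icc 1 k, (ρ ^ i)⁻¹ * e i)))
          + c * e (k + 1) * √(Δ 0) :=
          (hrec k).trans <| add_le_add (mul_le_mul_of_nonneg_left ih hρ.le)
            (mul_le_mul_of_nonneg_left (Real.sqrt_le_sqrt (hΔ k)) (mul_nonneg hc (he _)))
      _ = _ := by
          rw [Finset.sum_Icc_succ_top (Nat.le_add_left 1 k)]
          field_simp
          ring

theorem approx_gauss_southwell_additive_L1_general {n : ℕ}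
    (f : EuclideanSpace ℝ (Fin n) → ℝ)
    (f' : EuclideanSpace ℝ (Fin n) → EuclideanSpace ℝ (Fin n))
    (hf : ∀ x, HasGradientAt f (f' x) x)
    (L : ℝ) (hL : 0 < L)
    (hlip : ∀ (x : EuclideanSpace ℝ (Fin n)) (α : ℝ) (i : Fin n),
      |f' (x + α • EuclideanSpace.single i 1) i - f' x i| ≤ L * |α|)
    (μ₁ : ℝ) (hμ₁ : 0 < μ₁) (hμ₁L : μ₁ < L)
    (hsc : ∀ x y, f y ≥ f x + ⟪f' x, y - x⟫ + μ₁ / 2 * (∑ i, |y i - x i|) ^ 2)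
    (L₁ : ℝ) (hL₁ : 0 < L₁)
    (hlip1 : ∀ x y : EuclideanSpace ℝ (Fin n),
      (⨆ i, |f' x i - f' y i|) ≤ L₁ * ∑ i, |x i - y i|)
    (xs : EuclideanSpace ℝ (Fin n)) (hxs : ∀ y, f xs ≤ f y)
    (x : ℕ → EuclideanSpace ℝ (Fin n)) (ik : ℕ → Fin n)
    (ε : ℕ → ℝ) (hε : ∀ k, 0 ≤ ε k)
    (hrule : ∀ k, |f' (x k) (ik k)| ≥ (⨆ j, |f' (x k) j|) - ε (k + 1))
    (hstep : ∀ k, x (k + 1)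
      = x k - ((1 / L) * f' (x k) (ik k)) • EuclideanSpace.single (ik k) 1) :
    ∀ k : ℕ, f (x k) - f xs ≤ (1 - μ₁ / L) ^ k *
      (f (x 0) - f xs + Real.sqrt (f (x 0) - f xs) *
        (Real.sqrt (2 * L₁) / L
          * ∑ i ∈ Finset.Icc 1 k, ((1 - μ₁ / L) ^ i)⁻¹ * ε i)) := by
  have hρ : 0 < 1 - μ₁ / L := sub_pos.2 ((div_lt_one hL).2 hμ₁L)
  have hdesc (k : ℕ) : f (x (k + 1)) ≤ f (x k) - f' (x k) (ik k) ^ 2 / (2 * L) := by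
    rw [hstep k, one_div_mul_eq_div]
    exact apply_sub_smul_single_le hf hL (hlip (x k) · (ik k))
  have hanti : Antitone (f ∘ x) :=
    antitone_nat_of_succ_le fun k => (hdesc k).trans (sub_le_self _ (by positivity))
  refine le_pow_mul_of_le_mul_add_mul_sqrt hρ (by positivity) hε
    (fun k => sub_le_sub_right (hanti k.zero_le) _) fun k => ?_
  exact gap_le_of_approx_greedy_descent hL hL₁.le (by linarith [hdesc k]) (hrule k)
    (Real.iSup_nonneg fun _ => abs_nonneg _) (hε _) (sq_iSup_abs_grad_le hf hL₁ hlip1 hxs _)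
    (two_mul_sub_le_sq_iSup_abs_grad hμ₁ hsc xs _)

/-- convergence of approximate Gauss-Southwell with additive
errors, with the error term expressed via the 1-norm Lipschitz constant `L₁`. -/
theorem approx_gauss_southwell_additive_L1 {n : ℕ}
    (f : EuclideanSpace ℝ (Fin n) → ℝ)
    (hconv : ConvexOn ℝ Set.univ f)
    (f' : EuclideanSpace ℝ (Fin n) → EuclideanSpace ℝ (Fin n))
    (hf : ∀ x, HasGradientAt f (f' x) x)
    (L : ℝ) (hL : 0 < L)
    (hlip : ∀ (x : EuclideanSpace ℝ (Fin n)) (α : ℝ) (i : Fin n),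
      |f' (x + α • EuclideanSpace.single i 1) i - f' x i| ≤ L * |α|)
    (μ₁ : ℝ) (hμ₁ : 0 < μ₁) (hμ₁L : μ₁ < L)
    (hsc : ∀ x y, f y ≥ f x + ⟪f' x, y - x⟫ + μ₁ / 2 * (∑ i, |y i - x i|) ^ 2)
    (L₁ : ℝ) (hL₁ : 0 < L₁)
    (hlip1 : ∀ x y : EuclideanSpace ℝ (Fin n),
      (⨆ i, |f' x i - f' y i|) ≤ L₁ * ∑ i, |x i - y i|)
    (xs : EuclideanSpace ℝ (Fin n)) (hxs : ∀ y, f xs ≤ f y)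
    (x : ℕ → EuclideanSpace ℝ (Fin n)) (ik : ℕ → Fin n)
    (ε : ℕ → ℝ) (hε : ∀ k, 0 ≤ ε k)
    (hrule : ∀ k, |f' (x k) (ik k)| ≥ (⨆ j, |f' (x k) j|) - ε (k + 1))
    (hstep : ∀ k, x (k + 1)
      = x k - ((1 / L) * f' (x k) (ik k)) • EuclideanSpace.single (ik k) 1) :
    ∀ k : ℕ, f (x k) - f xs ≤ (1 - μ₁ / L) ^ k *
      (f (x 0) - f xs + Real.sqrt (f (x 0) - f xs) *
        (Real.sqrt (2 * L₁) / L
          * ∑ i ∈ Finset.Icc 1 k, ((1 - μ₁ / L) ^ i)⁻¹ * ε i)) :=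
  approx_gauss_southwell_additive_L1_general f f' hf L hL hlip μ₁ hμ₁ hμ₁L hsc L₁ hL₁ hlip1 xs hxs x
    ik ε hε hrule hstep
end
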